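/- The Choquet-type trace φ_α is monotone on positive semidefinite matrices: if 0 ≤ a ≤ b in Mₙ(ℂ) (Loewner order), then φ_α(a) ≤ φ_α(b). -/

import Mathlib

/-!
Weyl monotonicity: if `a ≤ b` then `λᵢ(a) ≤ λᵢ(b)`, since the span of the top `i` eigenvectors
of `a` and the span of the bottom `n - i + 1` eigenvectors of `b` meet in some `x ≠ 0`, and there
`λᵢ(a) ‖x‖² ≤ ⟪a x, x⟫ ≤ ⟪b x, x⟫ ≤ λᵢ(b) ‖x‖²`. Abel summation turns `φ_α(a)` into
`∑ λᵢ(a) (α(i) - α(i - 1))`, a combination of the eigenvalues with nonnegative coefficients.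
-/

open Matrix BigOperators Finset
open scoped ComplexOrder

/-- The `i`-th largest eigenvalue (0-indexed) of a Hermitian matrix. -/
noncomputable def eigDesc {n : ℕ} (a : Matrix (Fin n) (Fin n) ℂ) (ha : a.IsHermitian) (i : Fin n) : ℝ :=
  ha.eigenvalues (Tuple.sort ha.eigenvalues i.rev)

/-- Eigenvalues in decreasing order, extended by `0` beyond the size. `eigN a ha i = λ_{i+1}(a)`. -/
noncomputable def eigN {n : ℕ} (a : Matrix (Fin n) (Fin n) ℂ) (ha : a.IsHermitian) (i : ℕ) : ℝ :=
  if h : i < n then eigDesc a ha ⟨i, h⟩ else 0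

/-- The non-linear trace of Choquet type:
`φ_α(a) = ∑_{i=1}^{n-1} (λ_i(a) - λ_{i+1}(a)) α(i) + λ_n(a) α(n)`. -/
noncomputable def choquetTrace {n : ℕ} (α : ℕ → ℝ) (a : Matrix (Fin n) (Fin n) ℂ)
    (ha : a.IsHermitian) : ℝ :=
  ∑ i ∈ Finset.range n, (eigN a ha i - eigN a ha (i + 1)) * α (i + 1)

/-- Functional calculus of a Hermitian matrix `a` by a function `f : ℝ → ℝ` on its eigenvalues. -/
noncomputable def funCalc {n : ℕ} (f : ℝ → ℝ) (a : Matrix (Fin n) (Fin n) ℂ)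
    (ha : a.IsHermitian) : Matrix (Fin n) (Fin n) ℂ :=
  (ha.eigenvectorUnitary : Matrix (Fin n) (Fin n) ℂ) *
    Matrix.diagonal (fun i => (f (ha.eigenvalues i) : ℂ)) *
    star (ha.eigenvectorUnitary : Matrix (Fin n) (Fin n) ℂ)

/-- The absolute value `|a| = (a^* a)^{1/2}` of a matrix. -/
noncomputable def matAbs {n : ℕ} (a : Matrix (Fin n) (Fin n) ℂ) : Matrix (Fin n) (Fin n) ℂ :=
  ((Matrix.posSemidef_conjTranspose_mul_self a).1.eigenvectorUnitary : Matrix (Fin n) (Fin n) ℂ) *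
    Matrix.diagonal ((↑) ∘ Real.sqrt ∘ (Matrix.posSemidef_conjTranspose_mul_self a).1.eigenvalues) *
    (star (Matrix.posSemidef_conjTranspose_mul_self a).1.eigenvectorUnitary : Matrix (Fin n) (Fin n) ℂ)

theorem matAbs_isHermitian {n : ℕ} (a : Matrix (Fin n) (Fin n) ℂ) : (matAbs a).IsHermitian :=
  by
    unfold matAbs
    rw [Matrix.star_eq_conjTranspose]
    refine Matrix.isHermitian_mul_mul_conjTranspose _ ?_
    refine Matrix.isHermitian_diagonal_of_self_adjoint _ ?_
    ext i
    simp [Complex.conj_ofReal]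

open scoped InnerProductSpace

theorem Submodule.inf_ne_bot_of_finrank_lt_add {K V : Type*} [DivisionRing K] [AddCommGroup V]
    [Module K V] [FiniteDimensional K V] {U W : Submodule K V}
    (h : Module.finrank K V < Module.finrank K U + Module.finrank K W) : U ⊓ W ≠ ⊥ :=
  fun hUW => (Submodule.finrank_add_finrank_le_of_disjoint (disjoint_iff.2 hUW)).not_gt h

theorem LinearIndependent.finrank_span_image {K V ι : Type*} [DivisionRing K] [AddCommGroup V]
    [Module K V] {v : ι → V} (hv : LinearIndependent K v) (s : Finset ι) :
    Module.finrank K (Submodule.span K (v '' s)) = #s := by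
  rw [← Subtype.range_coe (s := (s : Set ι)), ← Set.range_comp,
    finrank_span_eq_card (hv.comp _ Subtype.val_injective)]
  simp

theorem OrthonormalBasis.repr_eq_zero_of_mem_span_image {𝕜 E ι : Type*} [RCLike 𝕜]
    [NormedAddCommGroup E] [InnerProductSpace 𝕜 E] [Fintype ι] (b : OrthonormalBasis ι 𝕜 E)
    {s : Set ι} {x : E} (hx : x ∈ Submodule.span 𝕜 (b '' s)) {i : ι} (hi : i ∉ s) :
    b.repr x i = 0 := by
  rw [← b.coe_toBasis, b.toBasis.mem_span_image] at hx
  rw [← b.coe_toBasis_repr_apply]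
  exact Finsupp.notMem_support_iff.1 fun h => hi (hx h)

namespace Matrix.IsHermitian

variable {𝕜 m : Type*} [RCLike 𝕜] [Fintype m] [DecidableEq m] {A B : Matrix m m 𝕜}
  (hA : A.IsHermitian)

theorem eigenvectorBasis_repr_toEuclideanLin (x : EuclideanSpace 𝕜 m) (j : m) :
    hA.eigenvectorBasis.repr (toEuclideanLin A x) j =
      hA.eigenvalues j * hA.eigenvectorBasis.repr x j := by
  simp only [eigenvectorBasis, eigenvalues, eigenvalues₀, OrthonormalBasis.repr_reindex]
  exact LinearMap.IsSymmetric.eigenvectorBasis_apply_self_apply _ _ _ _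

theorem re_inner_toEuclideanLin_self (x : EuclideanSpace 𝕜 m) :
    RCLike.re ⟪toEuclideanLin A x, x⟫_𝕜 =
      ∑ j, hA.eigenvalues j * ‖hA.eigenvectorBasis.repr x j‖ ^ 2 := by
  rw [← hA.eigenvectorBasis.repr.inner_map_map, PiLp.inner_apply, map_sum]
  refine Finset.sum_congr rfl fun j _ => ?_
  rw [eigenvectorBasis_repr_toEuclideanLin, RCLike.inner_apply, (starRingEnd 𝕜).map_mul,
    RCLike.conj_ofReal, mul_left_comm, RCLike.mul_conj]
  norm_cast

theorem norm_sq_eq_sum_eigenvectorBasis_repr (x : EuclideanSpace 𝕜 m) :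
    ‖x‖ ^ 2 = ∑ j, ‖hA.eigenvectorBasis.repr x j‖ ^ 2 := by
  rw [← hA.eigenvectorBasis.repr.norm_map, EuclideanSpace.norm_sq_eq]

theorem mul_norm_sq_le_re_inner_of_mem_span {S : Set m} {c : ℝ}
    (hS : ∀ j ∈ S, c ≤ hA.eigenvalues j) {x : EuclideanSpace 𝕜 m}
    (hx : x ∈ Submodule.span 𝕜 (hA.eigenvectorBasis '' S)) :
    c * ‖x‖ ^ 2 ≤ RCLike.re ⟪toEuclideanLin A x, x⟫_𝕜 := by
  rw [hA.re_inner_toEuclideanLin_self, hA.norm_sq_eq_sum_eigenvectorBasis_repr, mul_sum]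
  refine sum_le_sum fun j _ => ?_
  by_cases hj : j ∈ S
  · exact mul_le_mul_of_nonneg_right (hS j hj) (by positivity)
  · simp [hA.eigenvectorBasis.repr_eq_zero_of_mem_span_image hx hj]

theorem re_inner_le_mul_norm_sq_of_mem_span {S : Set m} {d : ℝ}
    (hS : ∀ j ∈ S, hA.eigenvalues j ≤ d) {x : EuclideanSpace 𝕜 m}
    (hx : x ∈ Submodule.span 𝕜 (hA.eigenvectorBasis '' S)) :
    RCLike.re ⟪toEuclideanLin A x, x⟫_𝕜 ≤ d * ‖x‖ ^ 2 := by
  rw [hA.re_inner_toEuclideanLin_self, hA.norm_sq_eq_sum_eigenvectorBasis_repr, mul_sum]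
  refine sum_le_sum fun j _ => ?_
  by_cases hj : j ∈ S
  · exact mul_le_mul_of_nonneg_right (hS j hj) (by positivity)
  · simp [hA.eigenvectorBasis.repr_eq_zero_of_mem_span_image hx hj]

theorem le_of_le_eigenvalues_of_eigenvalues_le (hB : B.IsHermitian) (hAB : (B - A).PosSemidef)
    {S T : Finset m} (hST : Fintype.card m < #S + #T) {c d : ℝ}
    (hS : ∀ j ∈ S, c ≤ hA.eigenvalues j) (hT : ∀ j ∈ T, hB.eigenvalues j ≤ d) : c ≤ d := by
  have hdim : Module.finrank 𝕜 (EuclideanSpace 𝕜 m) <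
      Module.finrank 𝕜 (Submodule.span 𝕜 (hA.eigenvectorBasis '' S)) +
        Module.finrank 𝕜 (Submodule.span 𝕜 (hB.eigenvectorBasis '' T)) := by
    rwa [finrank_euclideanSpace,
      hA.eigenvectorBasis.orthonormal.linearIndependent.finrank_span_image,
      hB.eigenvectorBasis.orthonormal.linearIndependent.finrank_span_image]
  obtain ⟨x, ⟨hxS, hxT⟩, hx0⟩ :=
    Submodule.exists_mem_ne_zero_of_ne_bot (Submodule.inf_ne_bot_of_finrank_lt_add hdim)
  have hloewner : RCLike.re ⟪toEuclideanLin A x, x⟫_𝕜 ≤ RCLike.re ⟪toEuclideanLin B x, x⟫_𝕜 := by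
    have := (isPositive_toEuclideanLin_iff.2 hAB).2 x
    rwa [map_sub, LinearMap.sub_apply, inner_sub_left, map_sub, sub_nonneg] at this
  refine le_of_mul_le_mul_right ?_ (by positivity : 0 < ‖x‖ ^ 2)
  calc c * ‖x‖ ^ 2 ≤ RCLike.re ⟪toEuclideanLin A x, x⟫_𝕜 :=
        hA.mul_norm_sq_le_re_inner_of_mem_span hS hxS
    _ ≤ RCLike.re ⟪toEuclideanLin B x, x⟫_𝕜 := hloewner
    _ ≤ d * ‖x‖ ^ 2 := hB.re_inner_le_mul_norm_sq_of_mem_span hT hxT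

end Matrix.IsHermitian

theorem eigDesc_le_eigDesc {n : ℕ} {a b : Matrix (Fin n) (Fin n) ℂ} (ha : a.IsHermitian)
    (hb : b.IsHermitian) (hab : (b - a).PosSemidef) (i : Fin n) :
    eigDesc a ha i ≤ eigDesc b hb i := by
  refine ha.le_of_le_eigenvalues_of_eigenvalues_le hb hab
    (S := (Ici i.rev).map (Tuple.sort ha.eigenvalues).toEmbedding)
    (T := (Iic i.rev).map (Tuple.sort hb.eigenvalues).toEmbedding) ?_ ?_ ?_
  · simp only [card_map, Fin.card_Ici, Fin.card_Iic, Fintype.card_fin]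
    omega
  · simp only [mem_map, Equiv.coe_toEmbedding, mem_Ici]
    rintro _ ⟨k, hk, rfl⟩
    exact Tuple.monotone_sort ha.eigenvalues hk
  · simp only [mem_map, Equiv.coe_toEmbedding, mem_Iic]
    rintro _ ⟨k, hk, rfl⟩
    exact Tuple.monotone_sort hb.eigenvalues hk

theorem eigN_le_eigN {n : ℕ} {a b : Matrix (Fin n) (Fin n) ℂ} (ha : a.IsHermitian)
    (hb : b.IsHermitian) (hab : (b - a).PosSemidef) (i : ℕ) : eigN a ha i ≤ eigN b hb i := by
  unfold eigN
  split_ifs with hi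
  · exact eigDesc_le_eigDesc ha hb hab ⟨i, hi⟩
  · rfl

theorem Finset.sum_range_sub_mul_eq_sum_mul_sub {R : Type*} [CommRing R] (n : ℕ) {e g : ℕ → R}
    (he : e n = 0) (hg : g 0 = 0) :
    ∑ i ∈ range n, (e i - e (i + 1)) * g (i + 1) = ∑ i ∈ range n, e i * (g (i + 1) - g i) := by
  have hshift : ∑ i ∈ range n, e (i + 1) * g (i + 1) = ∑ i ∈ range n, e i * g i := by
    have h := sum_range_succ' (fun i => e i * g i) n
    rw [sum_range_succ, he, hg, zero_mul, mul_zero, add_zero, add_zero] at h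
    exact h.symm
  simp only [sub_mul, mul_sub, sum_sub_distrib, hshift]

theorem choquetTrace_eq_sum_eigN_mul_sub {n : ℕ} {α : ℕ → ℝ} (hα0 : α 0 = 0)
    (a : Matrix (Fin n) (Fin n) ℂ) (ha : a.IsHermitian) :
    choquetTrace α a ha = ∑ i ∈ range n, eigN a ha i * (α (i + 1) - α i) :=
  sum_range_sub_mul_eq_sum_mul_sub n (by simp [eigN]) hα0

/-- the Choquet-type trace is monotone for the Loewner order. -/
theorem stmt1 (n : ℕ) (α : ℕ → ℝ) (hα0 : α 0 = 0)
    (hmono : ∀ i j : ℕ, i ≤ j → j ≤ n → α i ≤ α j)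
    (a b : Matrix (Fin n) (Fin n) ℂ) (ha : a.PosSemidef) (hb : b.PosSemidef)
    (hab : (b - a).PosSemidef) :
    choquetTrace α a ha.1 ≤ choquetTrace α b hb.1 := by
  rw [choquetTrace_eq_sum_eigN_mul_sub hα0, choquetTrace_eq_sum_eigN_mul_sub hα0]
  gcongr with i hi
  · exact sub_nonneg.2 (hmono i (i + 1) i.le_succ (mem_range.1 hi))
  · exact eigN_le_eigN ha.1 hb.1 hab i
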